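/- arXiv:1703.02930 — 2 statements merged into one kernel-verified Lean document; each statement's English description precedes it below -/
import Mathlib

section
/- Let f : ℝ → ℝ be continuous and piecewise polynomial with at most P pieces, each of degree at most D. If m is a positive integer and |f(x) − (x mod 2)| < 1/2 for every integer x ∈ {0, 1, …, 2^m − 1}, then 2^m − 1 ≤ P·(D + 1). -/
/-- A feedforward neural network architecture together with its activation
functions.  The nodes are `Fin numNodes`, listed in topological order: every
edge goes from a node of smaller index to a node of strictly larger index.
Nodes `0, …, numInputs − 1` are the input nodes (in-degree 0); all remaining
nodes are computation units; the last node is the (single) output unit. -/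
structure NNArch where
  numNodes : ℕ
  numInputs : ℕ
  hIn : numInputs < numNodes
  edges : Finset (Fin numNodes × Fin numNodes)
  hTopo : ∀ e ∈ edges, e.1 < e.2
  hTarget : ∀ e ∈ edges, numInputs ≤ (e.2 : ℕ)
  act : Fin numNodes → ℝ → ℝ

namespace NNArch

/-- The output node: the last node in the topological order. -/
def outNode (N : NNArch) : Fin N.numNodes := ⟨N.numNodes - 1, by have := N.hIn; omega⟩

/-- The number `U` of computation units. -/
def numUnits (N : NNArch) : ℕ := N.numNodes - N.numInputs

/-- The number `W` of parameters: one weight per edge and one bias per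
computation unit. -/
def numParams (N : NNArch) : ℕ := N.edges.card + N.numUnits

/-- The edges entering node `v`. -/
def incoming (N : NNArch) (v : Fin N.numNodes) :
    Finset (Fin N.numNodes × Fin N.numNodes) :=
  N.edges.filter fun e => e.2 = v

/-- The output of node `v`, given edge weights `w`, biases `b` and network
input `x`.  An input node outputs the corresponding coordinate of `x`; a
computation unit applies its activation function to `wᵀz + b`, except the
output unit, which outputs `wᵀz + b` unchanged. -/
noncomputable def value (N : NNArch) (w : Fin N.numNodes × Fin N.numNodes → ℝ)
    (b : Fin N.numNodes → ℝ) (x : Fin N.numInputs → ℝ) (v : Fin N.numNodes) : ℝ :=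
  if hv : (v : ℕ) < N.numInputs then x ⟨v, hv⟩
  else
    let s := (∑ e ∈ (N.incoming v).attach, w e.1 * N.value w b x e.1.1) + b v
    if (v : ℕ) = N.numNodes - 1 then s else N.act v s
termination_by (v : ℕ)
decreasing_by
  have he := Finset.mem_filter.mp e.2
  have h1 := N.hTopo e.1 he.1
  have h2 : e.1.2 = v := he.2
  rw [Fin.lt_def] at h1
  omega

/-- The real-valued function computed by the network for a given setting of
the parameters. -/
noncomputable def eval (N : NNArch) (w : Fin N.numNodes × Fin N.numNodes → ℝ)
    (b : Fin N.numNodes → ℝ) (x : Fin N.numInputs → ℝ) : ℝ :=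
  N.value w b x N.outNode

/-- The class of functions computed by the architecture as its parameters
range over all real values. -/
def funClass (N : NNArch) : Set ((Fin N.numInputs → ℝ) → ℝ) :=
  { f | ∃ w b, f = N.eval w b }

/-- The layer of a node: `0` for nodes with no predecessors, and otherwise one
more than the maximal layer of a predecessor. -/
noncomputable def layer (N : NNArch) (v : Fin N.numNodes) : ℕ :=
  (N.incoming v).attach.sup fun e => N.layer e.1.1 + 1
termination_by (v : ℕ)
decreasing_by
  have he := Finset.mem_filter.mp e.2
  have h1 := N.hTopo e.1 he.1
  have h2 : e.1.2 = v := he.2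
  rw [Fin.lt_def] at h1
  omega

/-- The number `L` of layers: the layer of the output node. -/
noncomputable def depth (N : NNArch) : ℕ := N.layer N.outNode

/-- A ReLU network: every activation function is `x ↦ max 0 x`. -/
def IsReLU (N : NNArch) : Prop := ∀ v, N.act v = fun z => max 0 z

end NNArch

/-- A finite set `S` is shattered by `sgn(F)` if every binary pattern on `S`
is realized by the sign of some `f ∈ F`. -/
def Shatters {X : Type*} (F : Set (X → ℝ)) (S : Finset X) : Prop :=
  ∀ c : X → Bool, ∃ f ∈ F, ∀ x ∈ S, (0 < f x ↔ c x = true)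

/-- The index of the piece (among the `B + 1` intervals determined by the
breakpoints `t`) containing the point `x`. -/
noncomputable def pieceIndex {B : ℕ} (t : Fin B → ℝ) (x : ℝ) : Fin (B + 1) :=
  ⟨(Finset.univ.filter fun i => t i ≤ x).card, by
    have h : (Finset.univ.filter fun i => t i ≤ x).card ≤ B := by
      simpa using Finset.card_filter_le (Finset.univ : Finset (Fin B)) _
    omega⟩

/-- `f` is piecewise polynomial with at most `p` pieces, each of degree at
most `d`: there are `B` breakpoints (`B + 1 ≤ p`) listed in nondecreasing
order, partitioning `ℝ` into at most `p` intervals, and on each resulting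
interval `f` agrees with a polynomial of degree at most `d`. -/
def PiecewisePoly (f : ℝ → ℝ) (p d : ℕ) : Prop :=
  ∃ (B : ℕ) (t : Fin B → ℝ) (q : Fin (B + 1) → Polynomial ℝ),
    B + 1 ≤ p ∧ Monotone t ∧ (∀ i, (q i).natDegree ≤ d) ∧
    ∀ x : ℝ, f x = (q (pieceIndex t x)).eval x

/-! Between consecutive points `x k < x (k + 1)` at which `f - c` changes sign, the continuous
function `f` takes the value `c`. If `x k` and `x (k + 1)` lie in the same piece, that crossing
is a root of `qᵢ - c` for the polynomial `qᵢ` of the piece, which is nonzero because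
`f (x k) ≠ c`; this happens at most `D` times per piece. Since the pieces are ordered, the
consecutive points change piece at most `B` times, where `B + 1` is the number of pieces. Hence
there are at most `B + (B + 1) D < P (D + 1)` sign changes, while the parity pattern on
`0, …, 2^m - 1` forces `2^m - 1` of them at the level `1/2`. -/

open Finset Polynomial

lemma pieceIndex_monotone {B : ℕ} (t : Fin B → ℝ) : Monotone (pieceIndex t) := by
  intro x y hxy
  refine Fin.mk_le_mk.mpr (card_le_card fun i hi => ?_)
  simp only [mem_filter] at hi ⊢
  exact ⟨hi.1, hi.2.trans hxy⟩

lemma pieceIndex_eq_of_mem_Icc {B : ℕ} (t : Fin B → ℝ) {a b y : ℝ}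
    (hab : pieceIndex t a = pieceIndex t b) (hy : y ∈ Set.Icc a b) :
    pieceIndex t y = pieceIndex t a :=
  le_antisymm (hab ▸ pieceIndex_monotone t hy.2) (pieceIndex_monotone t hy.1)

lemma card_filter_ne_succ_le {n : ℕ} {g : ℕ → Fin (n + 1)} (hg : Monotone g) (S : Finset ℕ) :
    #{k ∈ S | g k ≠ g (k + 1)} ≤ n := by
  have hlt : ∀ k, g k ≠ g (k + 1) → g k < g (k + 1) := fun k h => (hg k.le_succ).lt_of_ne h
  have hmono : StrictMonoOn (fun k => g (k + 1)) {k | g k ≠ g (k + 1)} :=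
    fun k _ k' hk' hkk' => (hg hkk').trans_lt (hlt k' hk')
  calc #{k ∈ S | g k ≠ g (k + 1)} ≤ #(univ.erase (0 : Fin (n + 1))) := by
        refine card_le_card_of_injOn (fun k => g (k + 1)) (fun k hk => ?_) ?_
        · simp only [coe_filter, Set.mem_ofPred_eq, mem_coe, mem_erase, mem_univ, and_true] at hk ⊢
          exact ((Fin.zero_le _).trans_lt (hlt k hk.2)).ne'
        · exact hmono.injOn.mono fun k hk => (mem_filter.mp hk).2
    _ = n := by simp

lemma card_le_natDegree_of_injOn_eval_eq {R ι : Type*} [CommRing R] [IsDomain R]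
    {p : R[X]} {c : R} (hp : p ≠ C c) {S : Finset ι} {ρ : ι → R} (hρ : Set.InjOn ρ S)
    (hroot : ∀ k ∈ S, p.eval (ρ k) = c) : #S ≤ p.natDegree := by
  classical
  have hne : p - C c ≠ 0 := sub_ne_zero.mpr hp
  calc #S ≤ #(p - C c).roots.toFinset := by
        refine card_le_card_of_injOn ρ (fun k hk => ?_) hρ
        simp [Multiset.mem_toFinset, mem_roots hne, hroot k hk]
    _ ≤ Multiset.card (p - C c).roots := Multiset.toFinset_card_le _
    _ ≤ p.natDegree := natDegree_sub_C (a := c) ▸ card_roots' _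

lemma exists_mem_Ioo_eq_of_mul_neg {f : ℝ → ℝ} (hf : Continuous f) {a b c : ℝ} (hab : a ≤ b)
    (h : (f a - c) * (f b - c) < 0) : ∃ ρ ∈ Set.Ioo a b, f ρ = c := by
  rcases mul_neg_iff.mp h with ⟨ha, hb⟩ | ⟨ha, hb⟩
  · exact intermediate_value_Ioo' hab hf.continuousOn ⟨by linarith, by linarith⟩
  · exact intermediate_value_Ioo hab hf.continuousOn ⟨by linarith, by linarith⟩

theorem PiecewisePoly.card_sign_changes_lt {f : ℝ → ℝ} {P D : ℕ} (hf : Continuous f)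
    (hpp : PiecewisePoly f P D) {x : ℕ → ℝ} (hx : Monotone x) {c : ℝ} {S : Finset ℕ}
    (hS : ∀ k ∈ S, (f (x k) - c) * (f (x (k + 1)) - c) < 0) :
    #S < P * (D + 1) := by
  obtain ⟨B, t, q, hBP, -, hdeg, hq⟩ := hpp
  have hcross : ∀ k ∈ S, ∃ ρ ∈ Set.Ioo (x k) (x (k + 1)), f ρ = c :=
    fun k hk => exists_mem_Ioo_eq_of_mul_neg hf (hx k.le_succ) (hS k hk)
  choose! ρ hρ hρc using hcross
  have hρmono : StrictMonoOn ρ S := fun k hk k' hk' hkk' =>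
    (hρ k hk).2.trans ((hx (Nat.succ_le_of_lt hkk')).trans_lt (hρ k' hk').1)
  set piece : ℕ → Fin (B + 1) := fun k => pieceIndex t (x k)
  have hpiece : Monotone piece := (pieceIndex_monotone t).comp hx
  set stay := {k ∈ S | piece k = piece (k + 1)}
  have hroot : ∀ k ∈ stay, (q (piece k)).eval (ρ k) = c := by
    intro k hk
    obtain ⟨hkS, hsame⟩ := mem_filter.mp hk
    have hρpiece : pieceIndex t (ρ k) = piece k :=
      pieceIndex_eq_of_mem_Icc t hsame (Set.Ioo_subset_Icc_self (hρ k hkS))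
    rw [← hρpiece, ← hq, hρc k hkS]
  have hfiber : ∀ i, #{k ∈ stay | piece k = i} ≤ D := by
    intro i
    rcases eq_empty_or_nonempty {k ∈ stay | piece k = i} with hempty | ⟨k₀, hk₀⟩
    · simp [hempty]
    obtain ⟨hk₀stay, rfl⟩ := mem_filter.mp hk₀
    have hq₀ : q (piece k₀) ≠ C c := fun h => by
      have hfc : f (x k₀) = c := (hq (x k₀)).trans ((congrArg (eval (x k₀)) h).trans eval_C)
      simpa [hfc] using hS k₀ (mem_filter.mp hk₀stay).1
    refine (card_le_natDegree_of_injOn_eval_eq (ρ := ρ) hq₀ ?_ fun k hk => ?_).trans (hdeg _)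
    · exact hρmono.injOn.mono fun k hk => (mem_filter.mp (mem_filter.mp hk).1).1
    · obtain ⟨hk, hki⟩ := mem_filter.mp hk
      rw [← hki, hroot k hk]
  calc #S = #stay + #{k ∈ S | piece k ≠ piece (k + 1)} :=
        (card_filter_add_card_filter_not _).symm
    _ = ∑ i, #{k ∈ stay | piece k = i} + #{k ∈ S | piece k ≠ piece (k + 1)} := by
        rw [card_eq_sum_card_fiberwise (t := univ) fun k _ => mem_univ (piece k)]
    _ ≤ ∑ _i : Fin (B + 1), D + B :=
        add_le_add (sum_le_sum fun i _ => hfiber i) (card_filter_ne_succ_le hpiece S)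
    _ < (B + 1) * (D + 1) := by
        simp only [sum_const, card_univ, Fintype.card_fin, smul_eq_mul]
        nlinarith
    _ ≤ P * (D + 1) := Nat.mul_le_mul_right _ hBP

lemma mul_neg_of_abs_sub_parity_lt {u v : ℝ} (k : ℕ) (hu : |u - ((k % 2 : ℕ) : ℝ)| < 1 / 2)
    (hv : |v - (((k + 1) % 2 : ℕ) : ℝ)| < 1 / 2) : (u - 1 / 2) * (v - 1 / 2) < 0 := by
  have hsucc : ((k + 1) % 2 : ℕ) = 1 - k % 2 := by omega
  rw [hsucc, abs_lt] at hv
  rw [abs_lt] at hu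
  rcases Nat.mod_two_eq_zero_or_one k with h | h <;> norm_num [h] at hu hv <;> nlinarith

theorem statement5_general (f : ℝ → ℝ) (P D : ℕ) (hcont : Continuous f)
    (hpp : PiecewisePoly f P D) (m : ℕ)
    (hf : ∀ x : ℕ, x < 2 ^ m → |f (x : ℝ) - ((x % 2 : ℕ) : ℝ)| < 1 / 2) :
    2 ^ m - 1 ≤ P * (D + 1) := by
  have hchanges : ∀ k ∈ range (2 ^ m - 1), (f k - 1 / 2) * (f ↑(k + 1) - 1 / 2) < 0 := by
    intro k hk
    have hk : k + 1 < 2 ^ m := by rw [mem_range] at hk; omega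
    exact mul_neg_of_abs_sub_parity_lt k (hf k (by omega)) (hf (k + 1) hk)
  simpa using (hpp.card_sign_changes_lt hcont Nat.mono_cast hchanges).le

/-- **Oscillation bound for piecewise polynomials.**  If `f : ℝ → ℝ` is
continuous and piecewise polynomial with at most `P` pieces, each of degree at
most `D`, and `|f(x) − (x mod 2)| < 1/2` for every integer
`x ∈ {0, 1, …, 2^m − 1}` (with `m` a positive integer), then
`2^m − 1 ≤ P·(D + 1)`. -/
theorem statement5 (f : ℝ → ℝ) (P D : ℕ) (hcont : Continuous f)
    (hpp : PiecewisePoly f P D) (m : ℕ) (hm : 0 < m)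
    (hf : ∀ x : ℕ, x < 2 ^ m → |f (x : ℝ) - ((x % 2 : ℕ) : ℝ)| < 1 / 2) :
    2 ^ m - 1 ≤ P * (D + 1) :=
  statement5_general f P D hcont hpp m hf
end

section
/- Let G be a finite directed acyclic graph whose nodes are partitioned into layers 0, 1, …, L such that every edge goes from a node in some layer to a node in a strictly higher layer, with a unique node s in layer 0 and a designated node o in layer L. For i ∈ {1, …, L}, let W_i ≥ 1 denote the number of edges whose head lies in layer i, and let W = Σ_{i=1}^L W_i. Then the number of directed paths from s to o is at most Π_{i=1}^L (1 + W_i), which is at most ((L + W)/L)^L; in particular, if W ≥ L, the number of such paths is at most (2W/L)^L. -/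
/-!
Layers strictly increase along a path, so a path from `s` uses at most one edge entering each
layer `i ∈ {1, …, L}`, and, its head being `s`, it is determined by these edges: its list of
consecutive pairs is sorted by the layer of the second node. Hence the paths inject into
`∏ᵢ Option (edges entering layer i)`. The second bound is AM–GM applied to the numbers `1 + Wᵢ`,
and the third follows from `L + W ≤ 2W`.
-/

open Finset

namespace List

variable {α β γ : Type*}

theorem IsChain.rel_of_mem_consecutivePairs {R : α → α → Prop} :
    ∀ {l : List α}, l.IsChain R → ∀ {e : α × α}, e ∈ l.consecutivePairs → R e.1 e.2
  | [], _, _, he | [_], _, _, he => by simp [consecutivePairs] at he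
  | a :: b :: l, h, e, he => by
    rw [isChain_cons_cons] at h
    simp only [consecutivePairs, tail_cons, zip_cons_cons, mem_cons] at he
    rcases he with rfl | he
    · exact h.1
    · exact h.2.rel_of_mem_consecutivePairs he

theorem map_snd_consecutivePairs (l : List α) : l.consecutivePairs.map Prod.snd = l.tail :=
  map_snd_zip (by cases l <;> simp)

theorem eq_of_head?_eq_of_consecutivePairs_eq {l₁ l₂ : List α} (hhead : l₁.head? = l₂.head?)
    (hpairs : l₁.consecutivePairs = l₂.consecutivePairs) : l₁ = l₂ := by
  have htail : l₁.tail = l₂.tail := by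
    rw [← map_snd_consecutivePairs, hpairs, map_snd_consecutivePairs]
  cases l₁ <;> cases l₂ <;> simp_all

theorem Pairwise.consecutivePairs {R : α → α → Prop} {l : List α} (h : l.Pairwise R) :
    l.consecutivePairs.Pairwise (fun e e' => R e.2 e'.2) := by
  rw [← pairwise_map (f := Prod.snd), map_snd_consecutivePairs]
  exact h.tail

variable [Preorder γ] [DecidableEq γ] {k : β → γ}

theorem find?_key_eq_of_pairwise_lt {z : List β} (hz : z.Pairwise (fun a b => k a < k b))
    {b : β} (hb : b ∈ z) : z.find? (fun a => k a = k b) = some b := by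
  induction z with
  | nil => simp at hb
  | cons a z ih =>
    rw [pairwise_cons] at hz
    rcases mem_cons.mp hb with rfl | hb
    · simp
    · have hne : k a ≠ k b := (hz.1 b hb).ne
      simp [hne, ih hz.2 hb]

theorem eq_of_pairwise_lt_of_find?_key_eq {z₁ z₂ : List β}
    (h₁ : z₁.Pairwise (fun a b => k a < k b)) (h₂ : z₂.Pairwise (fun a b => k a < k b))
    (S : Set γ) (hS₁ : ∀ b ∈ z₁, k b ∈ S) (hS₂ : ∀ b ∈ z₂, k b ∈ S)
    (hfind : ∀ i ∈ S, z₁.find? (fun a => k a = i) = z₂.find? (fun a => k a = i)) :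
    z₁ = z₂ := by
  let R : β → β → Prop := fun a b => k a < k b
  have : Std.Irrefl R := ⟨fun a => lt_irrefl (k a)⟩
  have : Std.Antisymm R := ⟨fun a b hab hba => absurd (hab.trans hba) (lt_irrefl (k a))⟩
  refine h₁.eq_of_mem_iff (r := R) h₂ fun b => ⟨fun hb => ?_, fun hb => ?_⟩
  · refine mem_of_find?_eq_some (p := fun a => decide (k a = k b)) ?_
    rw [← hfind _ (hS₁ b hb), find?_key_eq_of_pairwise_lt h₁ hb]
  · refine mem_of_find?_eq_some (p := fun a => decide (k a = k b)) ?_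
    rw [hfind _ (hS₂ b hb), find?_key_eq_of_pairwise_lt h₂ hb]

end List

theorem Real.prod_le_sum_div_card_pow {ι : Type*} (s : Finset ι) (z : ι → ℝ)
    (hz : ∀ i ∈ s, 0 ≤ z i) : ∏ i ∈ s, z i ≤ ((∑ i ∈ s, z i) / #s) ^ #s := by
  rcases s.eq_empty_or_nonempty with rfl | hs
  · simp
  have hcard : (0 : ℝ) < #s := by exact_mod_cast hs.card_pos
  have hprod : 0 ≤ ∏ i ∈ s, z i := prod_nonneg hz
  have amgm := Real.geom_mean_le_arith_mean s (fun _ => 1) z (fun _ _ => zero_le_one)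
    (by simpa using hcard) hz
  simp only [Real.rpow_one, one_mul, sum_const, nsmul_eq_mul, mul_one] at amgm
  calc ∏ i ∈ s, z i = ((∏ i ∈ s, z i) ^ (#s : ℝ)⁻¹) ^ #s := by
        rw [← Real.rpow_natCast, ← Real.rpow_mul hprod, inv_mul_cancel₀ hcard.ne', Real.rpow_one]
    _ ≤ ((∑ i ∈ s, z i) / #s) ^ #s := by gcongr

section LayeredDAG

variable {V : Type*} {edges : Finset (V × V)} {layerOf : V → ℕ}

def edgeIntoLayer (layerOf : V → ℕ) (l : List V) (i : ℕ) : Option (V × V) :=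
  l.consecutivePairs.find? fun e => layerOf e.2 = i

theorem mem_filter_of_mem_edgeIntoLayer {l : List V} (hl : l.IsChain fun u v => (u, v) ∈ edges)
    {i : ℕ} {e : V × V} (he : e ∈ edgeIntoLayer layerOf l i) :
    e ∈ edges.filter fun e => layerOf e.2 = i := by
  have he' : l.consecutivePairs.find? (fun e => layerOf e.2 = i) = some e := he
  refine mem_filter.mpr ⟨hl.rel_of_mem_consecutivePairs (List.mem_of_find?_eq_some he'), ?_⟩
  simpa using List.find?_some he'

theorem pairwise_layerOf_lt (hedge : ∀ e ∈ edges, layerOf e.1 < layerOf e.2) {l : List V}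
    (hl : l.IsChain fun u v => (u, v) ∈ edges) : l.Pairwise fun u v => layerOf u < layerOf v := by
  have hmap : (l.map layerOf).IsChain (· < ·) :=
    List.isChain_map layerOf |>.mpr <| hl.imp fun u v h => hedge (u, v) h
  exact List.pairwise_map.mp hmap.pairwise

theorem eq_of_forall_edgeIntoLayer_eq {L : ℕ} (hlay : ∀ v, layerOf v ≤ L)
    (hedge : ∀ e ∈ edges, layerOf e.1 < layerOf e.2) {l₁ l₂ : List V}
    (hl₁ : l₁.IsChain fun u v => (u, v) ∈ edges) (hl₂ : l₂.IsChain fun u v => (u, v) ∈ edges)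
    (hhead : l₁.head? = l₂.head?)
    (h : ∀ i ∈ Icc 1 L, edgeIntoLayer layerOf l₁ i = edgeIntoLayer layerOf l₂ i) : l₁ = l₂ := by
  have hrange : ∀ {l : List V}, (l.IsChain fun u v => (u, v) ∈ edges) →
      ∀ e ∈ l.consecutivePairs, layerOf e.2 ∈ (Icc 1 L : Set ℕ) := fun hl e he => by
    have := hedge e (hl.rel_of_mem_consecutivePairs he)
    simpa using ⟨by omega, hlay e.2⟩
  refine List.eq_of_head?_eq_of_consecutivePairs_eq hhead <|
    List.eq_of_pairwise_lt_of_find?_key_eq (k := fun e : V × V => layerOf e.2)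
      (pairwise_layerOf_lt hedge hl₁).consecutivePairs
      (pairwise_layerOf_lt hedge hl₂).consecutivePairs _ (hrange hl₁) (hrange hl₂) h

theorem ncard_le_prod_one_add_card_filter {L : ℕ} (hlay : ∀ v, layerOf v ≤ L)
    (hedge : ∀ e ∈ edges, layerOf e.1 < layerOf e.2) (s : V) {P : Set (List V)}
    (hP : ∀ l ∈ P, (l.IsChain fun u v => (u, v) ∈ edges) ∧ l.head? = some s) :
    P.ncard ≤ ∏ i ∈ Icc 1 L, (1 + #(edges.filter fun e => layerOf e.2 = i)) := by
  let code : P → (i : Icc 1 L) → Option (edges.filter fun e => layerOf e.2 = i) :=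
    fun l i => (edgeIntoLayer layerOf l i).pmap Subtype.mk
      fun _ he => mem_filter_of_mem_edgeIntoLayer (hP l l.2).1 he
  have hcode : Function.Injective code := fun l₁ l₂ h => Subtype.ext <| by
    refine eq_of_forall_edgeIntoLayer_eq hlay hedge (hP l₁ l₁.2).1 (hP l₂ l₂.2).1
      ((hP l₁ l₁.2).2.trans (hP l₂ l₂.2).2.symm) fun i hi => ?_
    simpa [code, Option.map_pmap] using congrArg (Option.map Subtype.val) (congrFun h ⟨i, hi⟩)
  calc P.ncard = Nat.card P := (Nat.card_coe_set_eq P).symm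
    _ ≤ Nat.card ((i : Icc 1 L) → Option (edges.filter fun e => layerOf e.2 = i)) :=
      Nat.card_le_card_of_injective code hcode
    _ = ∏ i ∈ Icc 1 L, (1 + #(edges.filter fun e => layerOf e.2 = i)) := by
      rw [Nat.card_pi, ← Finset.prod_coe_sort (Icc 1 L)]
      refine Finset.prod_congr rfl fun i _ => ?_
      rw [Finite.card_option, Nat.card_eq_finsetCard, add_comm]

end LayeredDAG

theorem statement16_general (V L : ℕ)
    (edges : Finset (Fin V × Fin V))
    (layerOf : Fin V → ℕ) (hlay : ∀ v, layerOf v ≤ L)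
    (hedge : ∀ e ∈ edges, layerOf e.1 < layerOf e.2)
    (s o : Fin V)
    (Wi : ℕ → ℕ)
    (hWi : ∀ i, Wi i = (edges.filter fun e => layerOf e.2 = i).card)
    (W : ℕ) (hW : W = ∑ i ∈ Finset.Icc 1 L, Wi i)
    (paths : Set (List (Fin V)))
    (hpaths : paths = {l : List (Fin V) |
      l.Chain' (fun u v => (u, v) ∈ edges) ∧
      l.head? = some s ∧ l.getLast? = some o}) :
    Set.ncard paths ≤ ∏ i ∈ Finset.Icc 1 L, (1 + Wi i) ∧
    ((∏ i ∈ Finset.Icc 1 L, (1 + Wi i) : ℕ) : ℝ) ≤ (((L : ℝ) + W) / L) ^ L ∧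
    (L ≤ W → (Set.ncard paths : ℝ) ≤ (2 * (W : ℝ) / L) ^ L) := by
  have hcount : paths.ncard ≤ ∏ i ∈ Icc 1 L, (1 + Wi i) := by
    simp only [hWi]
    refine ncard_le_prod_one_add_card_filter hlay hedge s fun l hl => ?_
    rw [hpaths] at hl
    exact ⟨hl.1, hl.2.1⟩
  have hamgm : ((∏ i ∈ Icc 1 L, (1 + Wi i) : ℕ) : ℝ) ≤ ((L + W) / L) ^ L := by
    have := Real.prod_le_sum_div_card_pow (Icc 1 L) (fun i => 1 + (Wi i : ℝ))
      fun i _ => by positivity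
    simpa [sum_add_distrib, hW] using this
  refine ⟨hcount, hamgm, fun hLW => ?_⟩
  calc (paths.ncard : ℝ) ≤ ((∏ i ∈ Icc 1 L, (1 + Wi i) : ℕ) : ℝ) := by exact_mod_cast hcount
    _ ≤ ((L + W) / L) ^ L := hamgm
    _ ≤ (2 * W / L) ^ L := by
      gcongr
      linarith [(Nat.cast_le (α := ℝ)).mpr hLW]

/-- **Path counting in a layered DAG (inequality (2)).**  Let `G` be a finite
DAG on nodes `Fin V`, with a layer assignment `layerOf : Fin V → ℕ` taking
values in `{0, …, L}` such that every edge goes to a strictly higher layer,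
a unique node `s` in layer `0`, and a designated node `o` in layer `L`.  For
`i ∈ {1, …, L}` let `Wᵢ ≥ 1` be the number of edges whose head lies in layer
`i`, and `W = ∑ᵢ Wᵢ`.  A directed path from `s` to `o` is a list of nodes
starting at `s`, ending at `o`, in which consecutive nodes are joined by
edges.  Then the number of directed paths from `s` to `o` is at most
`∏_{i=1}^L (1 + Wᵢ)`, which is at most `((L + W)/L)^L`; in particular, if
`W ≥ L`, the number of paths is at most `(2W/L)^L`. -/
theorem statement16 (V L : ℕ) (hV : 0 < V)
    (edges : Finset (Fin V × Fin V))
    (layerOf : Fin V → ℕ) (hlay : ∀ v, layerOf v ≤ L)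
    (hedge : ∀ e ∈ edges, layerOf e.1 < layerOf e.2)
    (s o : Fin V) (hs : ∀ v, layerOf v = 0 ↔ v = s) (ho : layerOf o = L)
    (Wi : ℕ → ℕ)
    (hWi : ∀ i, Wi i = (edges.filter fun e => layerOf e.2 = i).card)
    (hWpos : ∀ i ∈ Finset.Icc 1 L, 1 ≤ Wi i)
    (W : ℕ) (hW : W = ∑ i ∈ Finset.Icc 1 L, Wi i)
    (paths : Set (List (Fin V)))
    (hpaths : paths = {l : List (Fin V) |
      l.Chain' (fun u v => (u, v) ∈ edges) ∧
      l.head? = some s ∧ l.getLast? = some o}) :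
    Set.ncard paths ≤ ∏ i ∈ Finset.Icc 1 L, (1 + Wi i) ∧
    ((∏ i ∈ Finset.Icc 1 L, (1 + Wi i) : ℕ) : ℝ) ≤ (((L : ℝ) + W) / L) ^ L ∧
    (L ≤ W → (Set.ncard paths : ℝ) ≤ (2 * (W : ℝ) / L) ^ L) :=
  statement16_general V L edges layerOf hlay hedge s o Wi hWi W hW paths hpaths
end
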